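/- arXiv:2208.00743 — 5 statements merged into one kernel-verified Lean document; each statement's English description precedes it below -/
import Mathlib

section
/- For every integer n ≥ 3, the power graph P(G(n)) of the gyrogroup (G(n),⊕) is exactly the following graph Γ_n: two distinct vertices u, v ∈ {0,1,…,2^n−1} are adjacent if and only if both u < 2^{n-1} and v < 2^{n-1}, or u = 0, or v = 0. Equivalently, the induced subgraph of P(G(n)) on {0,1,…,2^{n-1}−1} is the complete graph K_{2^{n-1}} and every vertex of {2^{n-1},…,2^n−1} is adjacent only to the identity 0. -/
/-- The gyrogroup operation ⊕ on G(n) = {0,1,…,2^n−1}, with m = 2^(n-1). -/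
def gyroOp (n : ℕ) (i j : ℕ) : ℕ :=
  let m := 2 ^ (n - 1)
  if i < m then
    if j < m then (i + j) % m
    else (i + j) % m + m
  else
    if j < m then (i + (m / 2 - 1) * j) % m + m
    else ((m / 2 + 1) * i + (m / 2 - 1) * j) % m

/-- Left powers in the gyrogroup G(n): u^1 = u and u^(k+1) = u ⊕ u^k
(with u^0 taken to be the identity 0). -/
def gyroPow (n : ℕ) (u : ℕ) : ℕ → ℕ
  | 0 => 0
  | 1 => u
  | k + 2 => gyroOp n u (gyroPow n u (k + 1))

/-- The power graph of the gyrogroup (G(n),⊕): distinct vertices u, v are adjacent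
iff u^k = v or v^k = u for some k ≥ 1. -/
def powerGraph (n : ℕ) : SimpleGraph (Fin (2 ^ n)) :=
  SimpleGraph.fromRel (fun u v => ∃ k : ℕ, 1 ≤ k ∧ gyroPow n u.val k = v.val)

/-- The graph Γ_n: distinct vertices u, v ∈ {0,…,2^n−1} are adjacent iff
(u < 2^(n-1) and v < 2^(n-1)), or u = 0, or v = 0. -/
def Gamma (n : ℕ) : SimpleGraph (Fin (2 ^ n)) :=
  SimpleGraph.fromRel
    (fun u v => (u.val < 2 ^ (n - 1) ∧ v.val < 2 ^ (n - 1)) ∨ u.val = 0 ∨ v.val = 0)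

/-!
On the lower half `{0, …, m - 1}` (with `m = 2 ^ (n - 1)`) the operation `⊕` is addition
modulo `m`, so the powers of such a `u` are the multiples `k * u mod m`. In the cyclic
`2`-group `ℤ/mℤ` the cyclic subgroups form a chain, hence any two elements of the lower half
are powers of one another. An element `u` of the upper half satisfies `u ⊕ u = 0` and
`u ⊕ 0 = u`, so its powers alternate between `u` and `0`; as the lower half is closed under
`⊕`, such a `u` is a power of no other element, and its only neighbour is `0`.
-/

namespace Nat

theorem exists_pos_mul_mod_eq_of_gcd_dvd {m a b : ℕ} (hm : 0 < m) (h : gcd a m ∣ b) :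
    ∃ k, 1 ≤ k ∧ k * a % m = b % m := by
  obtain ⟨c, rfl⟩ := h
  rcases (gcd_le_right (m := a) hm).lt_or_eq with hlt | heq
  · obtain ⟨k, -, hk⟩ := exists_mul_mod_eq_gcd hlt
    refine ⟨k * c + m, by omega, ?_⟩
    calc (k * c + m) * a % m = a * k * c % m := by
          rw [add_mul, add_mul_mod_self_left, mul_comm a k, mul_right_comm]
      _ = gcd a m * c % m := by rw [← hk, mod_mul_mod]
  · refine ⟨m, hm, ?_⟩
    rw [heq, mul_mod_right, mul_mod_right]

theorem gcd_prime_pow_dvd_or {p r : ℕ} (hp : p.Prime) (a b : ℕ) :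
    gcd a (p ^ r) ∣ b ∨ gcd b (p ^ r) ∣ a := by
  obtain ⟨i, -, hi⟩ := (dvd_prime_pow hp).1 (gcd_dvd_right a (p ^ r))
  obtain ⟨j, -, hj⟩ := (dvd_prime_pow hp).1 (gcd_dvd_right b (p ^ r))
  rcases le_total i j with hij | hji
  · left
    exact hi ▸ (pow_dvd_pow p hij).trans (hj ▸ gcd_dvd_left b (p ^ r))
  · right
    exact hj ▸ (pow_dvd_pow p hji).trans (hi ▸ gcd_dvd_left a (p ^ r))

end Nat

section GyroPowers

variable {n u : ℕ}

theorem gyroPow_of_lt (hu : u < 2 ^ (n - 1)) (k : ℕ) :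
    gyroPow n u k = k * u % 2 ^ (n - 1) := by
  induction k using Nat.twoStepInduction with
  | zero => simp [gyroPow]
  | one => simp [gyroPow, Nat.mod_eq_of_lt hu]
  | more k _ ih =>
    have hlt : (k + 1) * u % 2 ^ (n - 1) < 2 ^ (n - 1) := Nat.mod_lt _ (by positivity)
    simp only [gyroPow, ih, gyroOp, if_pos hu, if_pos hlt, Nat.add_mod_mod]
    ring_nf

theorem gyroPow_of_le (hn : 2 ≤ n) (hu : 2 ^ (n - 1) ≤ u) (hu' : u < 2 ^ n) (k : ℕ) :
    gyroPow n u k = if Even k then 0 else u := by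
  have hm : 2 ^ n = 2 * 2 ^ (n - 1) := by rw [← pow_succ']; congr 1; omega
  have hhalf : 2 * (2 ^ (n - 1) / 2) = 2 ^ (n - 1) :=
    Nat.two_mul_div_two_of_even ((Nat.even_pow' (by omega)).2 even_two)
  have hnot : ¬ u < 2 ^ (n - 1) := by omega
  induction k using Nat.twoStepInduction with
  | zero => simp [gyroPow]
  | one => simp [gyroPow]
  | more k _ ih =>
    simp only [gyroPow, ih, gyroOp, if_neg hnot]
    by_cases hk : Even k
    · have hk1 : ¬ Even (k + 1) := by simpa [Nat.even_add_one] using hk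
      have hk2 : Even (k + 2) := by simpa [Nat.even_add] using hk
      have hsum : (2 ^ (n - 1) / 2 + 1) * u + (2 ^ (n - 1) / 2 - 1) * u = 2 ^ (n - 1) * u := by
        rw [← add_mul]; congr 1; omega
      rw [if_neg hk1, if_neg hnot, if_pos hk2, hsum, Nat.mul_mod_right]
    · have hk1 : Even (k + 1) := by simpa [Nat.even_add_one] using hk
      have hk2 : ¬ Even (k + 2) := by simpa [Nat.even_add] using hk
      rw [if_pos hk1, if_pos (by positivity), if_neg hk2, mul_zero, add_zero,
        Nat.mod_eq_sub_mod hu, Nat.mod_eq_of_lt (by omega)]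
      omega

theorem gyroPow_lt_or_eq_self_or_eq_zero (hn : 2 ≤ n) (hu : u < 2 ^ n) (k : ℕ) :
    (u < 2 ^ (n - 1) ∧ gyroPow n u k < 2 ^ (n - 1)) ∨
      gyroPow n u k = u ∨ gyroPow n u k = 0 := by
  by_cases hlt : u < 2 ^ (n - 1)
  · exact Or.inl ⟨hlt, gyroPow_of_lt hlt k ▸ Nat.mod_lt _ (by positivity)⟩
  · rw [gyroPow_of_le hn (not_lt.1 hlt) hu k]
    split_ifs <;> simp

theorem exists_gyroPow_eq_zero (hn : 2 ≤ n) (hu : u < 2 ^ n) :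
    ∃ k, 1 ≤ k ∧ gyroPow n u k = 0 := by
  by_cases hlt : u < 2 ^ (n - 1)
  · exact ⟨2 ^ (n - 1), Nat.one_le_two_pow, by rw [gyroPow_of_lt hlt, Nat.mul_mod_right]⟩
  · exact ⟨2, by norm_num, by rw [gyroPow_of_le hn (not_lt.1 hlt) hu]; simp⟩

theorem exists_gyroPow_eq_or_exists_gyroPow_eq {v : ℕ} (hu : u < 2 ^ (n - 1))
    (hv : v < 2 ^ (n - 1)) :
    (∃ k, 1 ≤ k ∧ gyroPow n u k = v) ∨ ∃ k, 1 ≤ k ∧ gyroPow n v k = u := by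
  have hm : 0 < 2 ^ (n - 1) := by positivity
  refine (Nat.gcd_prime_pow_dvd_or (r := n - 1) Nat.prime_two u v).imp
    (fun h => ?_) (fun h => ?_)
  · obtain ⟨k, hk, hkv⟩ := Nat.exists_pos_mul_mod_eq_of_gcd_dvd hm h
    exact ⟨k, hk, by rw [gyroPow_of_lt hu, hkv, Nat.mod_eq_of_lt hv]⟩
  · obtain ⟨k, hk, hku⟩ := Nat.exists_pos_mul_mod_eq_of_gcd_dvd hm h
    exact ⟨k, hk, by rw [gyroPow_of_lt hv, hku, Nat.mod_eq_of_lt hu]⟩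

end GyroPowers

/-- For every n ≥ 3, the power graph of the gyrogroup G(n) is exactly Γ_n. -/
theorem stmt_0 (n : ℕ) (hn : 3 ≤ n) : powerGraph n = Gamma n := by
  have hn2 : 2 ≤ n := by omega
  have forward : ∀ a b : Fin (2 ^ n), a ≠ b → (∃ k, 1 ≤ k ∧ gyroPow n a k = b) →
      (a.val < 2 ^ (n - 1) ∧ b.val < 2 ^ (n - 1)) ∨ a.val = 0 ∨ b.val = 0 := by
    rintro a b hab ⟨k, -, hk⟩
    rcases hk ▸ gyroPow_lt_or_eq_self_or_eq_zero hn2 a.isLt k with h | h | h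
    · exact Or.inl h
    · exact absurd (Fin.ext h.symm) hab
    · exact Or.inr (Or.inr h)
  have backward : ∀ a b : Fin (2 ^ n),
      (a.val < 2 ^ (n - 1) ∧ b.val < 2 ^ (n - 1)) ∨ a.val = 0 ∨ b.val = 0 →
      (∃ k, 1 ≤ k ∧ gyroPow n a k = b) ∨ ∃ k, 1 ≤ k ∧ gyroPow n b k = a := by
    rintro a b (⟨ha, hb⟩ | ha | hb)
    · exact exists_gyroPow_eq_or_exists_gyroPow_eq ha hb
    · exact Or.inr (ha ▸ exists_gyroPow_eq_zero hn2 b.isLt)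
    · exact Or.inl (hb ▸ exists_gyroPow_eq_zero hn2 a.isLt)
  ext u v
  simp only [powerGraph, Gamma, SimpleGraph.fromRel_adj]
  refine and_congr_right fun huv => ⟨?_, ?_⟩
  · rintro (h | h)
    · exact Or.inl (forward u v huv h)
    · exact Or.inr (forward v u huv.symm h)
  · rintro (h | h)
    · exact backward u v h
    · exact (backward v u h).symm
end

section
/- For every integer n ≥ 3, the reciprocal status of the vertices of Γ_n is: rs(0) = 2^n − 1; rs(u) = 3·2^{n-2} − 1 for every u with 1 ≤ u ≤ 2^{n-1} − 1; and rs(w) = 2^{n-1} for every w with 2^{n-1} ≤ w ≤ 2^n − 1. -/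
open Finset

open Classical in
/-- The reciprocal status of a vertex v: rs(v) = Σ_{u ≠ v} 1/d(u,v). -/
noncomputable def rs (n : ℕ) (v : Fin (2 ^ n)) : ℝ :=
  ∑ u ∈ univ.filter (fun u : Fin (2 ^ n) => u ≠ v), (1 : ℝ) / ((Gamma n).dist u v)

/-! Vertex 0 of Γ_n is universal, so any two non-adjacent vertices are at distance 2 and
rs(v) = (2^n − 1 + deg v) / 2. The three values follow from deg 0 = 2^n − 1,
deg u = 2^(n-1) − 1 for 0 < u < 2^(n-1), and deg w = 1 for w ≥ 2^(n-1). -/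

namespace SimpleGraph

variable {V : Type*} {G : SimpleGraph V} {c : V}

lemma IsUniversal.dist_eq_two (hc : G.IsUniversal c) {u v : V} (huv : u ≠ v)
    (hadj : ¬ G.Adj u v) : G.dist u v = 2 := by
  have huc : u ≠ c := by rintro rfl; exact hadj (hc huv)
  have hvc : v ≠ c := by rintro rfl; exact hadj (hc huv.symm).symm
  rw [dist, edist_eq_two_iff.mpr ⟨huv, hadj, c, (hc huc.symm).symm, (hc hvc.symm).symm⟩]
  rfl

variable [Fintype V] [DecidableEq V] [DecidableRel G.Adj]

lemma IsUniversal.sum_one_div_dist (hc : G.IsUniversal c) (v : V) :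
    ∑ u ∈ univ.erase v, (1 : ℝ) / G.dist u v =
      ((Fintype.card V : ℝ) - 1 + G.degree v) / 2 := by
  have hterm : ∀ u ∈ univ.erase v,
      (1 : ℝ) / G.dist u v = (1 + if G.Adj v u then 1 else 0) / 2 := by
    intro u hu
    by_cases hadj : G.Adj v u
    · rw [dist_eq_one_iff_adj.mpr hadj.symm, if_pos hadj]; norm_num
    · rw [hc.dist_eq_two (ne_of_mem_erase hu) (fun h => hadj h.symm), if_neg hadj]; norm_num
  have hneighbors : (univ.erase v).filter (G.Adj v) = G.neighborFinset v := by
    rw [neighborFinset_eq_filter, filter_erase, erase_eq_of_notMem (by simp)]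
  rw [sum_congr rfl hterm, ← sum_div, sum_add_distrib, sum_boole, hneighbors,
    card_neighborFinset_eq_degree]
  simp [Nat.cast_pred (Fintype.card_pos_iff.mpr ⟨v⟩)]

end SimpleGraph

lemma Gamma_adj {n : ℕ} {u v : Fin (2 ^ n)} :
    (Gamma n).Adj u v ↔
      u ≠ v ∧ ((u.val < 2 ^ (n - 1) ∧ v.val < 2 ^ (n - 1)) ∨ u.val = 0 ∨ v.val = 0) := by
  simp only [Gamma, SimpleGraph.fromRel_adj]
  tauto

instance inst_s7 (n : ℕ) : DecidableRel (Gamma n).Adj := fun _ _ => decidable_of_iff' _ Gamma_adj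

lemma Gamma_isUniversal_zero (n : ℕ) : (Gamma n).IsUniversal ⟨0, Nat.two_pow_pos n⟩ :=
  fun _ h => Gamma_adj.mpr ⟨h, Or.inr (Or.inl rfl)⟩

lemma rs_eq_degree (n : ℕ) (v : Fin (2 ^ n)) :
    rs n v = ((2 : ℝ) ^ n - 1 + (Gamma n).degree v) / 2 := by
  rw [rs, filter_ne', (Gamma_isUniversal_zero n).sum_one_div_dist, Fintype.card_fin]
  push_cast
  rfl

lemma Gamma_degree_zero (n : ℕ) : (Gamma n).degree ⟨0, Nat.two_pow_pos n⟩ = 2 ^ n - 1 := by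
  rw [(SimpleGraph.degree_eq_card_sub_one _ _).mpr (Gamma_isUniversal_zero n), Fintype.card_fin]

lemma Gamma_degree_of_lt {n : ℕ} {u : Fin (2 ^ n)} (hu0 : u.val ≠ 0)
    (hu : u.val < 2 ^ (n - 1)) :
    (Gamma n).degree u = 2 ^ (n - 1) - 1 := by
  have hneighbors : (Gamma n).neighborFinset u =
      ({w : Fin (2 ^ n) | w.val < 2 ^ (n - 1)} : Finset _).erase u := by
    ext w
    simp only [SimpleGraph.mem_neighborFinset, Gamma_adj, mem_erase, mem_filter, mem_univ,
      true_and, ne_eq, Fin.ext_iff]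
    omega
  have hle : 2 ^ (n - 1) ≤ 2 ^ n := Nat.pow_le_pow_right two_pos (n.sub_le 1)
  rw [← SimpleGraph.card_neighborFinset_eq_degree, hneighbors,
    card_erase_of_mem (by simpa using hu), Fin.card_filter_val_lt, min_eq_right hle]

lemma Gamma_degree_of_le {n : ℕ} {w : Fin (2 ^ n)} (hw : 2 ^ (n - 1) ≤ w.val) :
    (Gamma n).degree w = 1 := by
  have hneighbors : (Gamma n).neighborFinset w = {⟨0, Nat.two_pow_pos n⟩} := by
    ext u
    simp only [SimpleGraph.mem_neighborFinset, Gamma_adj, mem_singleton, Fin.ext_iff]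
    have := Nat.two_pow_pos (n - 1)
    omega
  rw [← SimpleGraph.card_neighborFinset_eq_degree, hneighbors, card_singleton]

theorem stmt_7_general (n : ℕ) :
    rs n ⟨0, Nat.two_pow_pos n⟩ = 2 ^ n - 1 ∧
    (∀ u : Fin (2 ^ n), 1 ≤ u.val → u.val ≤ 2 ^ (n - 1) - 1 →
      rs n u = 3 * 2 ^ (n - 2) - 1) ∧
    (∀ w : Fin (2 ^ n), 2 ^ (n - 1) ≤ w.val → rs n w = 2 ^ (n - 1)) := by
  refine ⟨?_, fun u hu0 hu => ?_, fun w hw => ?_⟩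
  · rw [rs_eq_degree, Gamma_degree_zero, Nat.cast_pred (Nat.two_pow_pos n)]
    push_cast
    ring
  · have hn : 2 ≤ n := by
      have := Nat.one_lt_two_pow_iff.mp (show 1 < 2 ^ (n - 1) by omega)
      omega
    obtain ⟨k, rfl⟩ := Nat.exists_eq_add_of_le hn
    rw [rs_eq_degree, Gamma_degree_of_lt (by omega) (by omega), Nat.cast_pred (Nat.two_pow_pos _)]
    simp only [show 2 + k - 1 = k + 1 by omega, show 2 + k - 2 = k by omega]
    push_cast
    ring
  · have hn : 1 ≤ n := by
      have := (Nat.pow_lt_pow_iff_right one_lt_two).mp (hw.trans_lt w.isLt)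
      omega
    obtain ⟨k, rfl⟩ := Nat.exists_eq_add_of_le hn
    rw [rs_eq_degree, Gamma_degree_of_le hw]
    simp only [show 1 + k - 1 = k by omega]
    push_cast
    ring

/-- For every n ≥ 3: rs(0) = 2^n − 1, rs(u) = 3·2^(n-2) − 1 for 1 ≤ u ≤ 2^(n-1)−1,
and rs(w) = 2^(n-1) for w ≥ 2^(n-1). -/
theorem stmt_7 (n : ℕ) (hn : 3 ≤ n) :
    rs n ⟨0, Nat.two_pow_pos n⟩ = 2 ^ n - 1 ∧
    (∀ u : Fin (2 ^ n), 1 ≤ u.val → u.val ≤ 2 ^ (n - 1) - 1 →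
      rs n u = 3 * 2 ^ (n - 2) - 1) ∧
    (∀ w : Fin (2 ^ n), 2 ^ (n - 1) ≤ w.val → rs n w = 2 ^ (n - 1)) :=
  stmt_7_general n
end

section
/- For every integer n ≥ 3, the metric dimension of Γ_n equals 2^n − 3; that is, the minimum cardinality of a resolving set of Γ_n is 2^n − 3. -/
/-- A finite set S of vertices is a resolving set of a graph G if distinct vertices
have distinct vectors of graph distances to the elements of S. -/
def IsResolving {V : Type*} (G : SimpleGraph V) (S : Finset V) : Prop :=
  ∀ u v : V, (∀ s ∈ S, G.dist u s = G.dist v s) → u = v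

namespace SimpleGraph

variable {V : Type*} (G : SimpleGraph V)

def DistTwins (u v : V) : Prop :=
  ∀ w, w ≠ u → w ≠ v → G.dist u w = G.dist v w

variable {G}

theorem connected_of_forall_adj {c : V} (hc : ∀ v ≠ c, G.Adj c v) : G.Connected := by
  refine (connected_iff_exists_forall_reachable G).2 ⟨c, fun v => ?_⟩
  obtain rfl | hv := eq_or_ne v c
  · rfl
  · exact (hc v hv).reachable

theorem dist_eq_two_of_forall_adj {c : V} (hc : ∀ v ≠ c, G.Adj c v) {u w : V} (huw : u ≠ w)
    (hadj : ¬G.Adj u w) : G.dist u w = 2 := by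
  have hu : u ≠ c := by rintro rfl; exact hadj (hc w huw.symm)
  have hw : w ≠ c := by rintro rfl; exact hadj (hc u hu).symm
  have hle : G.dist u w ≤ 2 := by
    simpa using dist_le (Walk.cons (hc u hu).symm (Walk.cons (hc w hw) Walk.nil))
  have hpos : 0 < G.dist u w := ((connected_of_forall_adj hc).preconnected u w).pos_dist_of_ne huw
  have hne_one : G.dist u w ≠ 1 := fun h => hadj (dist_eq_one_iff_adj.1 h)
  omega

end SimpleGraph

namespace IsResolving

variable {V : Type*} {G : SimpleGraph V} {S : Finset V}

theorem eq_of_distTwins (hS : IsResolving G S) {u v : V} (hu : u ∉ S) (hv : v ∉ S)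
    (huv : G.DistTwins u v) : u = v :=
  hS u v fun s hs => huv s (ne_of_mem_of_not_mem hs hu) (ne_of_mem_of_not_mem hs hv)

theorem card_compl_le [Fintype V] [DecidableEq V] {α : Type*} [Fintype α] (f : V → α)
    (hf : ∀ u v, f u = f v → G.DistTwins u v) (hS : IsResolving G S) :
    Sᶜ.card ≤ Fintype.card α := by
  refine Finset.card_le_card_of_injOn f (fun _ _ => Finset.mem_univ _) fun u hu v hv huv => ?_
  simp only [Finset.coe_compl, Set.mem_compl_iff, Finset.mem_coe] at hu hv
  exact hS.eq_of_distTwins hu hv (hf u v huv)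

theorem of_forall_notMem (hG : G.Connected)
    (h : ∀ u ∉ S, ∀ v ∉ S, (∀ s ∈ S, G.dist u s = G.dist v s) → u = v) : IsResolving G S := by
  intro u v huv
  by_cases hu : u ∈ S
  · have h := huv u hu
    rw [SimpleGraph.dist_self, eq_comm, hG.dist_eq_zero_iff] at h
    exact h.symm
  by_cases hv : v ∈ S
  · have h := huv v hv
    rw [SimpleGraph.dist_self, hG.dist_eq_zero_iff] at h
    exact h
  exact h u hu v hv huv

end IsResolving

namespace Gamma

variable {n : ℕ}

theorem adj_zero (v : Fin (2 ^ n)) (hv : v ≠ ⟨0, Nat.two_pow_pos n⟩) :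
    (Gamma n).Adj ⟨0, Nat.two_pow_pos n⟩ v :=
  (SimpleGraph.fromRel_adj _ _ _).2 ⟨hv.symm, Or.inl (Or.inr (Or.inl rfl))⟩

theorem connected : (Gamma n).Connected :=
  SimpleGraph.connected_of_forall_adj adj_zero

theorem dist_eq (u w : Fin (2 ^ n)) :
    (Gamma n).dist u w = if u = w then 0 else
      if (u.val < 2 ^ (n - 1) ∧ w.val < 2 ^ (n - 1)) ∨ u.val = 0 ∨ w.val = 0 then 1 else 2 := by
  split_ifs with huw hadj
  · simp [huw]
  · exact SimpleGraph.dist_eq_one_iff_adj.2 ((SimpleGraph.fromRel_adj _ _ _).2 ⟨huw, Or.inl hadj⟩)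
  · refine SimpleGraph.dist_eq_two_of_forall_adj adj_zero huw fun h => ?_
    rcases ((SimpleGraph.fromRel_adj _ _ _).1 h).2 with h | h
    · exact hadj h
    · exact hadj (by omega)

/-- The twin classes `{0}`, `P(n) \ {0}` and `H(n)`. -/
def vertexClass (n : ℕ) (u : Fin (2 ^ n)) : Fin 3 :=
  if u.val = 0 then 0 else if u.val < 2 ^ (n - 1) then 1 else 2

theorem distTwins_of_vertexClass_eq {u v : Fin (2 ^ n)} (h : vertexClass n u = vertexClass n v) :
    (Gamma n).DistTwins u v := by
  have h₀ : u.val = 0 ↔ v.val = 0 := by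
    unfold vertexClass at h; split_ifs at h <;> simp_all
  have hP : u.val < 2 ^ (n - 1) ↔ v.val < 2 ^ (n - 1) := by
    unfold vertexClass at h; split_ifs at h <;> simp_all; omega
  intro w hwu hwv
  simp only [dist_eq, if_neg hwu.symm, if_neg hwv.symm, h₀, hP]

theorem card_compl_le_three {S : Finset (Fin (2 ^ n))} (hS : IsResolving (Gamma n) S) :
    Sᶜ.card ≤ 3 := by
  simpa using hS.card_compl_le (vertexClass n) fun _ _ => distTwins_of_vertexClass_eq

theorem four_le_two_pow_pred (hn : 3 ≤ n) : 4 ≤ 2 ^ (n - 1) :=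
  Nat.pow_le_pow_right two_pos (by omega : 2 ≤ n - 1)

def exceptional (n : ℕ) (hn : 3 ≤ n) : Finset (Fin (2 ^ n)) :=
  ({0, 1, 2 ^ (n - 1)} : Finset ℕ).attachFin fun k hk => by
    have := Nat.two_pow_pred_mul_two (by omega : 0 < n)
    have := four_le_two_pow_pred hn
    simp only [Finset.mem_insert, Finset.mem_singleton] at hk
    omega

theorem card_exceptional (hn : 3 ≤ n) : (exceptional n hn).card = 3 := by
  have := four_le_two_pow_pred hn
  rw [exceptional, Finset.card_attachFin, Finset.card_eq_three]
  exact ⟨0, 1, 2 ^ (n - 1), by omega, by omega, by omega, rfl⟩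

theorem isResolving_compl_exceptional (hn : 3 ≤ n) :
    IsResolving (Gamma n) (exceptional n hn)ᶜ := by
  have := Nat.two_pow_pred_mul_two (by omega : 0 < n)
  have := four_le_two_pow_pred hn
  obtain ⟨p, hp⟩ : ∃ p : Fin (2 ^ n), p.val = 2 := ⟨⟨2, by omega⟩, rfl⟩
  obtain ⟨q, hq⟩ : ∃ q : Fin (2 ^ n), q.val = 2 ^ (n - 1) + 1 := ⟨⟨_, by omega⟩, rfl⟩
  have hpS : p ∈ (exceptional n hn)ᶜ := by simp [exceptional, Finset.mem_attachFin, hp]; omega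
  have hqS : q ∈ (exceptional n hn)ᶜ := by simp [exceptional, Finset.mem_attachFin, hq]
  refine IsResolving.of_forall_notMem connected fun u hu v hv huv => ?_
  have hup := huv p hpS
  have huq := huv q hqS
  simp only [exceptional, Finset.mem_compl, not_not, Finset.mem_attachFin, Finset.mem_insert,
    Finset.mem_singleton] at hu hv
  simp only [dist_eq, Fin.ext_iff, hp, hq] at hup huq
  ext
  grind

end Gamma

/-- For every n ≥ 3, the metric dimension of Γ_n is 2^n − 3: the minimum cardinality
of a resolving set of Γ_n is 2^n − 3. -/
theorem stmt_10 (n : ℕ) (hn : 3 ≤ n) :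
    IsLeast {k : ℕ | ∃ S : Finset (Fin (2 ^ n)), IsResolving (Gamma n) S ∧ S.card = k}
      (2 ^ n - 3) := by
  constructor
  · refine ⟨_, Gamma.isResolving_compl_exceptional hn, ?_⟩
    rw [Finset.card_compl, Fintype.card_fin, Gamma.card_exceptional hn]
  · rintro _ ⟨S, hS, rfl⟩
    have := Finset.card_add_card_compl S
    have := Gamma.card_compl_le_three hS
    rw [Fintype.card_fin] at *
    omega
end

section
/- For every integer n ≥ 3, the characteristic polynomial of the adjacency matrix of Γ_n equals x^{2^{n-1}−1} (x+1)^{2^{n-1}−2} · ( x^3 + (2 − 2^{n-1}) x^2 + (1 − 2^n) x + (2^{2n-2} − 2^n) ). -/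
/-!
Let `P` be the clique and `o` the vertex carrying the pendant vertices. Then `x • 1 - A = D - U * W`,
where `D` is diagonal with entry `x + 1` on `P` and `x` off `P`, and `U * W` is the rank-three matrix
`𝟙_P 𝟙_Pᵀ + 𝟙_o 𝟙_Pᶜᵀ + 𝟙_Pᶜ 𝟙_oᵀ`. The columns `𝟙_P, 𝟙_o, 𝟙_Pᶜ` of `U` are eigenvectors of `D`,
so the Weinstein–Aronszajn identity `det (1 - M * N) = det (1 - N * M)` turns `det (D - U * W)` into
`det D` times a `3 × 3` determinant built from the intersection numbers of `P`, `{o}` and `Pᶜ`.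
To invert `X` and `X + 1` the computation is done in the fraction field of `R[X]`.
-/

open Polynomial

noncomputable instance (n : ℕ) : DecidableRel (Gamma n).Adj := Classical.decRel _

open Finset
open scoped Matrix

section Incidence

variable (R : Type*) [CommRing R] {V ι κ : Type*} [Fintype V] [DecidableEq V]

def incidence (S : ι → Finset V) : Matrix ι V R := Matrix.of fun k j => if j ∈ S k then 1 else 0

variable {R}

theorem incidence_mul_transpose_incidence [Fintype κ] (S : ι → Finset V) (T : κ → Finset V) :
    incidence R S * (incidence R T)ᵀ = Matrix.of fun k l => (#(S k ∩ T l) : R) := by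
  refine Matrix.ext fun k l => ?_
  simp only [incidence, Matrix.mul_apply, Matrix.transpose_apply, Matrix.of_apply,
    ite_zero_mul_ite_zero, mul_one, sum_boole]
  congr 2
  ext j
  simp

theorem det_diagonal_add_indicator (P : Finset V) (x : R) :
    (Matrix.diagonal fun i => x + if i ∈ P then 1 else 0).det = (x + 1) ^ #P * x ^ #Pᶜ := by
  rw [Matrix.det_diagonal, ← prod_mul_prod_compl P]
  congr 1
  · rw [prod_congr rfl fun i hi => by rw [if_pos hi], prod_const]
  · rw [prod_congr rfl fun i hi => by rw [if_neg (mem_compl.mp hi), add_zero],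
      prod_const]

end Incidence

namespace CliqueWithPendants

variable {R : Type*} [CommRing R] {V : Type*} [Fintype V] [DecidableEq V] {P : Finset V} {o : V}

theorem adjMatrix_eq {G : SimpleGraph V} [DecidableRel G.Adj] (ho : o ∈ P)
    (hG : ∀ u v, G.Adj u v ↔ u ≠ v ∧ (u ∈ P ∧ v ∈ P ∨ u = o ∨ v = o)) :
    G.adjMatrix R = (incidence R ![P, {o}, Pᶜ])ᵀ * incidence R ![P, Pᶜ, {o}] -
      Matrix.diagonal fun i => if i ∈ P then 1 else 0 := by
  refine Matrix.ext fun i j => ?_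
  rw [Matrix.sub_apply, Matrix.mul_apply, Fin.sum_univ_three]
  simp only [SimpleGraph.adjMatrix_apply, hG, incidence, Matrix.transpose_apply, Matrix.of_apply,
    Matrix.diagonal_apply]
  by_cases hij : i = j
  · subst hij
    by_cases hi : i ∈ P <;> by_cases hio : i = o <;> simp_all
  · by_cases hi : i ∈ P <;> by_cases hj : j ∈ P <;> by_cases hio : i = o <;>
      by_cases hjo : j = o <;> simp_all

theorem gram_eq (ho : o ∈ P) :
    incidence R ![P, Pᶜ, {o}] * (incidence R ![P, {o}, Pᶜ])ᵀ
      = !![(#P : R), 1, 0; 0, 0, (#Pᶜ : R); 1, 1, 0] := by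
  rw [incidence_mul_transpose_incidence]
  refine Matrix.ext fun k l => ?_
  fin_cases k <;> fin_cases l <;> simp [ho, inter_comm Pᶜ P]

theorem det_one_sub_gram_mul_diagonal (p h a b : R) :
    (1 - !![p, 1, 0; 0, 0, h; 1, 1, 0] * Matrix.diagonal ![a, a, b]).det
      = (1 - p * a) * (1 - h * a * b) - h * a ^ 2 * b := by
  have hT : 1 - !![p, 1, 0; 0, 0, h; 1, 1, 0] * Matrix.diagonal ![a, a, b]
      = !![1 - p * a, -a, 0; 0, 1, -(h * b); -a, -a, 1] := by
    refine Matrix.ext fun i j => ?_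
    fin_cases i <;> fin_cases j <;> simp [Matrix.vecMul_diagonal]
  rw [hT, Matrix.det_fin_three]
  simp only [Matrix.of_apply, Matrix.cons_val', Matrix.cons_val_zero, Matrix.cons_val_one,
    Matrix.head_cons, Matrix.head_fin_const, Matrix.cons_val_two, Matrix.tail_cons,
    Matrix.empty_val', Matrix.cons_val_fin_one]
  ring

theorem diagonal_mul_transpose_incidence {K : Type*} [Field K] (ho : o ∈ P) {x : K}
    (hx : x ≠ 0) (hx1 : x + 1 ≠ 0) :
    (Matrix.diagonal fun i => x + if i ∈ P then 1 else 0) *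
        ((incidence K ![P, {o}, Pᶜ])ᵀ * Matrix.diagonal ![(x + 1)⁻¹, (x + 1)⁻¹, x⁻¹])
      = (incidence K ![P, {o}, Pᶜ])ᵀ := by
  refine Matrix.ext fun i k => ?_
  fin_cases k <;> by_cases hi : i ∈ P <;> by_cases hio : i = o <;>
    simp_all [incidence, Matrix.diagonal_mul, Matrix.mul_diagonal]

theorem det_scalar_sub_adjMatrix {K : Type*} [Field K] {G : SimpleGraph V} [DecidableRel G.Adj]
    (ho : o ∈ P) (hG : ∀ u v, G.Adj u v ↔ u ≠ v ∧ (u ∈ P ∧ v ∈ P ∨ u = o ∨ v = o))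
    (hP : 2 ≤ #P) (hPc : 1 ≤ #Pᶜ) {x : K} (hx : x ≠ 0) (hx1 : x + 1 ≠ 0) :
    (Matrix.scalar V x - G.adjMatrix K).det
      = x ^ (#Pᶜ - 1) * (x + 1) ^ (#P - 2) * ((x + 1 - #P) * (x ^ 2 + x - #Pᶜ) - #Pᶜ) := by
  set U := (incidence K ![P, {o}, Pᶜ])ᵀ
  set W := incidence K ![P, Pᶜ, {o}]
  set D : Matrix V V K := Matrix.diagonal fun i => x + if i ∈ P then 1 else 0
  set Λ := Matrix.diagonal ![(x + 1)⁻¹, (x + 1)⁻¹, x⁻¹]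
  have hsplit : Matrix.scalar V x - G.adjMatrix K = D - U * W := by
    rw [adjMatrix_eq ho hG, sub_sub_eq_add_sub, Matrix.scalar_apply, Matrix.diagonal_add]
  obtain ⟨p, hp⟩ := Nat.exists_eq_add_of_le' hP
  obtain ⟨q, hq⟩ := Nat.exists_eq_add_of_le' hPc
  calc (Matrix.scalar V x - G.adjMatrix K).det = (D * (1 - U * Λ * W)).det := by
        rw [hsplit, Matrix.mul_sub, Matrix.mul_one, ← Matrix.mul_assoc,
          diagonal_mul_transpose_incidence ho hx hx1]
    _ = D.det * (1 - W * U * Λ).det := by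
        rw [Matrix.det_mul, Matrix.det_one_sub_mul_comm, Matrix.mul_assoc]
    _ = (x + 1) ^ #P * x ^ #Pᶜ * ((1 - #P * (x + 1)⁻¹) * (1 - #Pᶜ * (x + 1)⁻¹ * x⁻¹)
          - #Pᶜ * (x + 1)⁻¹ ^ 2 * x⁻¹) := by
        rw [gram_eq ho, det_one_sub_gram_mul_diagonal, det_diagonal_add_indicator]
    _ = _ := by
        rw [hp, hq]
        field_simp
        push_cast
        ring

theorem charpoly_adjMatrix [IsDomain R] {G : SimpleGraph V} [DecidableRel G.Adj] (ho : o ∈ P)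
    (hG : ∀ u v, G.Adj u v ↔ u ≠ v ∧ (u ∈ P ∧ v ∈ P ∨ u = o ∨ v = o))
    (hP : 2 ≤ #P) (hPc : 1 ≤ #Pᶜ) :
    (G.adjMatrix R).charpoly = X ^ (#Pᶜ - 1) * (X + 1) ^ (#P - 2) *
      ((X + 1 - (#P : R[X])) * (X ^ 2 + X - (#Pᶜ : R[X])) - (#Pᶜ : R[X])) := by
  set φ := algebraMap R[X] (FractionRing R[X])
  have hφ : Function.Injective φ := IsFractionRing.injective _ _
  have hX : φ X ≠ 0 := (map_ne_zero_iff φ hφ).mpr X_ne_zero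
  have hX1 : φ X + 1 ≠ 0 := by
    simpa using (map_ne_zero_iff φ hφ).mpr (X_add_C_ne_zero (1 : R))
  have hmap : (Matrix.charmatrix (G.adjMatrix R)).map φ
      = Matrix.scalar V (φ X) - G.adjMatrix (FractionRing R[X]) := by
    refine Matrix.ext fun i j => ?_
    by_cases hij : i = j
    · subst hij
      simp [Matrix.charmatrix_apply_eq]
    · simp [hij, SimpleGraph.adjMatrix_apply, apply_ite]
  apply hφ
  rw [Matrix.charpoly, RingHom.map_det, RingHom.mapMatrix_apply, hmap,
    det_scalar_sub_adjMatrix ho hG hP hPc hX hX1]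
  simp

end CliqueWithPendants

/-- For every n ≥ 3, the characteristic polynomial of the adjacency matrix of Γ_n is
x^(2^(n-1)−1) (x+1)^(2^(n-1)−2) (x³ + (2−2^(n-1))x² + (1−2^n)x + (2^(2n-2)−2^n)). -/
theorem stmt_13 (n : ℕ) (hn : 3 ≤ n) :
    ((Gamma n).adjMatrix ℤ).charpoly
      = X ^ (2 ^ (n - 1) - 1) * (X + 1) ^ (2 ^ (n - 1) - 2) *
        (X ^ 3 + C ((2 : ℤ) - 2 ^ (n - 1)) * X ^ 2 + C ((1 : ℤ) - 2 ^ n) * X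
          + C ((2 : ℤ) ^ (2 * n - 2) - 2 ^ n)) := by
  set m := 2 ^ (n - 1) with hm
  have hm2 : 2 ≤ m := Nat.le_self_pow (by omega) 2
  have hpow : 2 ^ n = m + m := by rw [hm, ← two_mul, ← pow_succ']; congr 1; omega
  set P : Finset (Fin (2 ^ n)) := {i | (i : ℕ) < m}
  have hP : #P = m := by rw [Fin.card_filter_val_lt]; omega
  have hPc : #Pᶜ = m := by rw [card_compl, Fintype.card_fin, hP]; omega
  have hG : ∀ u v, (Gamma n).Adj u v ↔
      u ≠ v ∧ (u ∈ P ∧ v ∈ P ∨ u = ⟨0, Nat.two_pow_pos n⟩ ∨ v = ⟨0, Nat.two_pow_pos n⟩) := by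
    intro u v
    simp only [Gamma, SimpleGraph.fromRel_adj, P, mem_filter, mem_univ, true_and, Fin.ext_iff]
    omega
  have ho : (⟨0, Nat.two_pow_pos n⟩ : Fin (2 ^ n)) ∈ P :=
    mem_filter.mpr ⟨mem_univ _, two_pos.trans_le hm2⟩
  rw [CliqueWithPendants.charpoly_adjMatrix ho hG (by omega) (by omega), hP, hPc]
  have h2n : (2 : ℤ) ^ n = 2 * 2 ^ (n - 1) := by rw [← pow_succ']; congr 1; omega
  have h2n2 : (2 : ℤ) ^ (2 * n - 2) = (2 ^ (n - 1)) ^ 2 := by rw [← pow_mul]; congr 1; omega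
  rw [h2n, h2n2, hm]
  simp only [map_sub, map_mul, map_pow, map_ofNat, map_one]
  push_cast
  ring
end

section
/- For every integer n ≥ 3, the spectral radius λ_1(Γ_n) (the largest eigenvalue of the adjacency matrix of Γ_n) satisfies 2^{n-1} − 1 < λ_1(Γ_n) ≤ 2^{n-1} − 1 + √(2^{n-1}), where 2^{n-1} − 1 is the spectral radius of the complete graph K_{2^{n-1}} (the power graph of the cyclic group Z_{2^{n-1}}). -/
/-!
The partition {0}, P(n) ∖ {0}, H(n) of the vertices of Γ_n is equitable, so the adjacency
matrix maps vectors constant on the three cells to vectors of the same kind. Both bounds come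
from such test vectors, with m = 2^(n-1). The vector equal to m on P(n) and to 1 on H(n) has
Rayleigh quotient m − 1 + (m + 1)/(m² + 1) > m − 1. With s = √m and L = m − 1 + s, the positive
vector t with values L(1 + s), L, 1 + s on the three cells satisfies A t ≤ L t entrywise, which
for a nonnegative matrix bounds every real eigenvalue by L (Collatz–Wielandt).
-/

open Finset Matrix

theorem Matrix.le_of_mem_spectrum_of_mulVec_le {ι : Type*} [Fintype ι] [DecidableEq ι]
    {A : Matrix ι ι ℝ} (hA : ∀ i j, 0 ≤ A i j) {t : ι → ℝ} (ht : ∀ i, 0 < t i) {L : ℝ}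
    (hAt : ∀ i, (A *ᵥ t) i ≤ L * t i) {μ : ℝ} (hμ : μ ∈ spectrum ℝ A) : μ ≤ L := by
  rw [← spectrum_toLin', ← Module.End.hasEigenvalue_iff_mem_spectrum] at hμ
  obtain ⟨v, hv⟩ := hμ.exists_hasEigenvector
  have hAv : A *ᵥ v = μ • v := by simpa using hv.apply_eq_smul
  obtain ⟨k, hk⟩ := Function.ne_iff.1 hv.2
  have : Nonempty ι := ⟨k⟩
  -- compare the eigenvalue equation with `A t ≤ L t` at a coordinate maximising `|v i| / t i`
  obtain ⟨i, hi⟩ := Finite.exists_max fun i => |v i| / t i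
  set r := |v i| / t i
  have hvr : ∀ j, |v j| ≤ r * t j := fun j => (div_le_iff₀ (ht j)).1 (hi j)
  have hvi : 0 < |v i| :=
    (div_pos_iff_of_pos_right (ht i)).1 ((div_pos (abs_pos.2 hk) (ht k)).trans_le (hi k))
  have key : |μ| * |v i| ≤ L * |v i| :=
    calc |μ| * |v i| = |∑ j, A i j * v j| := by
          rw [← abs_mul, ← smul_eq_mul, ← Pi.smul_apply, ← hAv]; rfl
      _ ≤ ∑ j, A i j * (r * t j) := (abs_sum_le_sum_abs _ _).trans <| sum_le_sum fun j _ => by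
          rw [abs_mul, abs_of_nonneg (hA i j)]; exact mul_le_mul_of_nonneg_left (hvr j) (hA i j)
      _ = r * (A *ᵥ t) i := by
          simp only [mulVec, dotProduct, mul_sum]; exact sum_congr rfl fun j _ => by ring
      _ ≤ r * (L * t i) := mul_le_mul_of_nonneg_left (hAt i) (div_nonneg (abs_nonneg _) (ht i).le)
      _ = L * |v i| := by rw [mul_left_comm, div_mul_cancel₀ _ (ht i).ne']
  exact (le_abs_self μ).trans (le_of_mul_le_mul_right key hvi)

theorem Matrix.IsHermitian.dotProduct_mulVec_le_of_spectrum_le {ι : Type*} [Fintype ι]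
    [DecidableEq ι] {A : Matrix ι ι ℝ} (hA : A.IsHermitian) {c : ℝ}
    (hc : ∀ μ ∈ spectrum ℝ A, μ ≤ c) (x : ι → ℝ) : x ⬝ᵥ (A *ᵥ x) ≤ c * (x ⬝ᵥ x) := by
  have hpsd : (algebraMap ℝ (Matrix ι ι ℝ) c - A).PosSemidef := by
    refine posSemidef_iff_isHermitian_and_spectrum_nonneg.2 ⟨(isHermitian_diagonal _).sub hA, ?_⟩
    rw [← spectrum.singleton_sub_eq]
    rintro _ ⟨_, rfl, μ, hμ, rfl⟩
    exact sub_nonneg.2 (hc μ hμ)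
  have := hpsd.dotProduct_mulVec_nonneg x
  simp [sub_mulVec, dotProduct_sub, Algebra.algebraMap_eq_smul_one, smul_mulVec,
    dotProduct_smul] at this
  linarith

theorem Matrix.IsHermitian.exists_isGreatest_spectrum {ι : Type*} [Fintype ι] [DecidableEq ι]
    [Nonempty ι] {A : Matrix ι ι ℝ} (hA : A.IsHermitian) :
    ∃ lam, IsGreatest (spectrum ℝ A) lam := by
  have hne : (spectrum ℝ A).Nonempty :=
    hA.spectrum_real_eq_range_eigenvalues ▸ Set.range_nonempty _
  exact ⟨sSup _, hne.csSup_mem A.finite_real_spectrum,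
    fun _ h => le_csSup A.finite_real_spectrum.bddAbove h⟩

namespace SimpleGraph

variable {V : Type*} {G : SimpleGraph V} [DecidableRel G.Adj]

theorem adjMatrix_nonneg (i j : V) : 0 ≤ G.adjMatrix ℝ i j := by
  rw [adjMatrix_apply]; split_ifs <;> norm_num

theorem IsRegularOfDegree.isGreatest_spectrum_adjMatrix [Fintype V] [DecidableEq V] [Nonempty V]
    {d : ℕ}
    (hG : G.IsRegularOfDegree d) : IsGreatest (spectrum ℝ (G.adjMatrix ℝ)) d := by
  have hone : G.adjMatrix ℝ *ᵥ Function.const V 1 = (d : ℝ) • Function.const V 1 := by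
    ext v; simp [hG v]
  refine ⟨?_, fun μ hμ => ?_⟩
  · rw [← spectrum_toLin', ← Module.End.hasEigenvalue_iff_mem_spectrum]
    exact Module.End.hasEigenvalue_of_hasEigenvector
      (Module.End.hasEigenvector_iff.2 ⟨by simpa using hone, by simp⟩)
  · exact le_of_mem_spectrum_of_mulVec_le adjMatrix_nonneg (t := Function.const V 1)
      (fun _ => one_pos) (fun v => by simp [hG v]) hμ

end SimpleGraph

namespace Gamma

theorem adj_iff {n : ℕ} {u v : Fin (2 ^ n)} : (Gamma n).Adj u v ↔
    u ≠ v ∧ ((u.val < 2 ^ (n - 1) ∧ v.val < 2 ^ (n - 1)) ∨ u.val = 0 ∨ v.val = 0) := by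
  rw [Gamma, SimpleGraph.fromRel_adj]
  constructor
  · rintro ⟨huv, h | h⟩ <;> [exact ⟨huv, h⟩; exact ⟨huv, by tauto⟩]
  · rintro ⟨huv, h⟩; exact ⟨huv, Or.inl h⟩

def cellVec (n : ℕ) (a b c : ℝ) (v : Fin (2 ^ n)) : ℝ :=
  if v.val = 0 then a else if v.val < 2 ^ (n - 1) then b else c

theorem sum_cellVec {n : ℕ} (hn : 1 ≤ n) (a b c : ℝ) :
    ∑ v, cellVec n a b c v = a + (2 ^ (n - 1) - 1) * b + 2 ^ (n - 1) * c := by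
  obtain ⟨k, hk⟩ : ∃ k, 2 ^ (n - 1) = k + 1 :=
    ⟨_, (Nat.succ_pred_eq_of_pos (by positivity)).symm⟩
  have hN : 2 ^ n = (k + 1) + (k + 1) := by
    rw [← hk, ← two_mul, ← pow_succ', Nat.sub_add_cancel hn]
  simp only [cellVec]
  rw [Fin.sum_univ_eq_sum_range (fun i => if i = 0 then a else if i < 2 ^ (n - 1) then b else c),
    hN, sum_range_add, sum_range_succ']
  have hP : ∀ x ∈ range k, (if x + 1 = 0 then a else if x + 1 < 2 ^ (n - 1) then b else c) = b :=
    fun x hx => by rw [if_neg (by omega), if_pos (by rw [mem_range] at hx; omega)]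
  have hH : ∀ x ∈ range (k + 1),
      (if k + 1 + x = 0 then a else if k + 1 + x < 2 ^ (n - 1) then b else c) = c :=
    fun x _ => by rw [if_neg (by omega), if_neg (by omega)]
  have hkR : (2 : ℝ) ^ (n - 1) = k + 1 := by exact_mod_cast hk
  rw [sum_congr rfl hP, sum_congr rfl hH, if_pos rfl, hkR]
  simp
  ring

theorem adjMatrix_mulVec_cellVec {n : ℕ} (hn : 1 ≤ n) (a b c : ℝ) :
    (Gamma n).adjMatrix ℝ *ᵥ cellVec n a b c =
      cellVec n ((2 ^ (n - 1) - 1) * b + 2 ^ (n - 1) * c) (a + (2 ^ (n - 1) - 2) * b) a := by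
  ext j
  have hm : 1 ≤ 2 ^ (n - 1) := Nat.one_le_two_pow
  simp only [mulVec, dotProduct, SimpleGraph.adjMatrix_apply, adj_iff, ite_mul, one_mul, zero_mul]
  by_cases hj0 : j.val = 0
  · rw [sum_congr rfl (g := cellVec n 0 b c) fun k _ => by
      simp only [cellVec, ne_eq, Fin.ext_iff]; split_ifs <;> first | rfl | omega]
    simp [sum_cellVec hn, cellVec, hj0]
  by_cases hjP : j.val < 2 ^ (n - 1)
  · rw [sum_congr rfl (g := fun k => cellVec n a b 0 k - if k = j then b else 0) fun k _ => by
      simp only [cellVec, ne_eq, Fin.ext_iff]; split_ifs <;> first | omega | simp]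
    rw [sum_sub_distrib, sum_cellVec hn]
    simp [cellVec, hj0, hjP]
    ring
  · rw [sum_congr rfl (g := cellVec n a 0 0) fun k _ => by
      simp only [cellVec, ne_eq, Fin.ext_iff]; split_ifs <;> first | rfl | omega]
    simp [sum_cellVec hn, cellVec, hj0, hjP]

theorem cellVec_dotProduct_cellVec {n : ℕ} (hn : 1 ≤ n) (a b c a' b' c' : ℝ) :
    cellVec n a b c ⬝ᵥ cellVec n a' b' c' =
      a * a' + (2 ^ (n - 1) - 1) * (b * b') + 2 ^ (n - 1) * (c * c') := by
  rw [dotProduct, sum_congr rfl (g := cellVec n (a * a') (b * b') (c * c')) fun v _ => by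
    simp only [cellVec]; split_ifs <;> rfl, sum_cellVec hn]

theorem two_pow_sub_one_lt_of_isGreatest_spectrum {n : ℕ} (hn : 1 ≤ n) {lam : ℝ}
    (h : IsGreatest (spectrum ℝ ((Gamma n).adjMatrix ℝ)) lam) : 2 ^ (n - 1) - 1 < lam := by
  set m : ℝ := 2 ^ (n - 1)
  have hm : 1 ≤ m := one_le_pow₀ (by norm_num)
  have hray := ((Gamma n).isHermitian_adjMatrix ℝ).dotProduct_mulVec_le_of_spectrum_le h.2
    (cellVec n m m 1)
  rw [adjMatrix_mulVec_cellVec hn, cellVec_dotProduct_cellVec hn,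
    cellVec_dotProduct_cellVec hn] at hray
  by_contra! hlam
  nlinarith [mul_le_mul_of_nonneg_right hlam (by positivity : 0 ≤ m ^ 3 + m)]

theorem le_two_pow_sub_one_add_sqrt_of_mem_spectrum {n : ℕ} (hn : 1 ≤ n) {μ : ℝ}
    (hμ : μ ∈ spectrum ℝ ((Gamma n).adjMatrix ℝ)) : μ ≤ 2 ^ (n - 1) - 1 + √(2 ^ (n - 1)) := by
  set m : ℝ := 2 ^ (n - 1)
  set s := √m
  set L := m - 1 + s
  have hm : 1 ≤ m := one_le_pow₀ (by norm_num)
  have hs : s ^ 2 = m := Real.sq_sqrt (by linarith)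
  have hs1 : 1 ≤ s := Real.one_le_sqrt.2 hm
  refine le_of_mem_spectrum_of_mulVec_le SimpleGraph.adjMatrix_nonneg
    (t := cellVec n (L * (1 + s)) L (1 + s)) (fun v => by unfold cellVec; split_ifs <;> positivity)
    (fun v => ?_) hμ
  rw [adjMatrix_mulVec_cellVec hn]
  unfold cellVec
  split_ifs
  · have key : L * (L * (1 + s)) - ((m - 1) * L + m * (1 + s)) = m * (1 + s) * (L - 1) := by
      linear_combination L * hs
    linarith [mul_nonneg (mul_nonneg (by linarith : 0 ≤ m) (by linarith : 0 ≤ 1 + s))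
      (by linarith : 0 ≤ L - 1)]
  · exact le_of_eq (by ring)
  · exact le_rfl

end Gamma

/-- For every n ≥ 3, the spectral radius λ₁(Γ_n), i.e. the largest eigenvalue of the
(real symmetric) adjacency matrix of Γ_n, satisfies
2^(n-1) − 1 < λ₁(Γ_n) ≤ 2^(n-1) − 1 + √(2^(n-1)); here 2^(n-1) − 1 is the spectral
radius of the complete graph K_{2^(n-1)} (the power graph of Z_{2^(n-1)}). -/
theorem stmt_14 (n : ℕ) (hn : 3 ≤ n) :
    (∃ lam : ℝ, IsGreatest (spectrum ℝ ((Gamma n).adjMatrix ℝ)) lam ∧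
      2 ^ (n - 1) - 1 < lam ∧ lam ≤ 2 ^ (n - 1) - 1 + Real.sqrt (2 ^ (n - 1))) ∧
    IsGreatest (spectrum ℝ ((⊤ : SimpleGraph (Fin (2 ^ (n - 1)))).adjMatrix ℝ))
      (2 ^ (n - 1) - 1) := by
  have hn1 : 1 ≤ n := by omega
  obtain ⟨lam, hlam⟩ := ((Gamma n).isHermitian_adjMatrix ℝ).exists_isGreatest_spectrum
  refine ⟨⟨lam, hlam, Gamma.two_pow_sub_one_lt_of_isGreatest_spectrum hn1 hlam,
    Gamma.le_two_pow_sub_one_add_sqrt_of_mem_spectrum hn1 hlam.1⟩, ?_⟩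
  have hK := (SimpleGraph.IsRegularOfDegree.top (V := Fin (2 ^ (n - 1)))).isGreatest_spectrum_adjMatrix
  rwa [Fintype.card_fin, Nat.cast_sub Nat.one_le_two_pow, Nat.cast_pow, Nat.cast_ofNat,
    Nat.cast_one] at hK
end
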